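/- arXiv:1608.00860 — 3 statements merged into one kernel-verified Lean document; each statement's English description precedes it below -/
import Mathlib

section
/- Let k be a positive-definite kernel on 𝒳, let {S_j}_{j∈J} be a partition of 𝒳 into pairwise disjoint nonempty subsets, and let X̄ be a finite tuple of pairwise distinct points of 𝒳 with K(X̄,X̄) invertible. Define k₂(x,x') = k(x,x') − k(x,X̄)·K(X̄,X̄)⁻¹·k(X̄,x') if x and x' lie in the same cell S_j, and k₂(x,x') = 0 otherwise. Then k₂ is a positive-definite kernel on 𝒳. -/
open scoped BigOperators

/-- A symmetric function `k` is a positive-definite kernel if for every finite list of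
pairwise distinct points `x₁,…,xₘ` and all real coefficients `α₁,…,αₘ`,
`∑ᵢⱼ αᵢ αⱼ k(xᵢ,xⱼ) ≥ 0`. -/
def PosDefKernel {𝒳 : Type*} (k : 𝒳 → 𝒳 → ℝ) : Prop :=
  ∀ (m : ℕ) (x : Fin m → 𝒳), Function.Injective x →
    ∀ α : Fin m → ℝ, 0 ≤ ∑ i, ∑ j, α i * α j * k (x i) (x j)

/-- The Nyström kernel based on landmark points `Xb`:
`k_Nys(x,x') = k(x,Xb)·K(Xb,Xb)⁻¹·k(Xb,x')`. -/
noncomputable def nystromKernel {𝒳 : Type*} (k : 𝒳 → 𝒳 → ℝ) {r : ℕ} (Xb : Fin r → 𝒳)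
    (x x' : 𝒳) : ℝ :=
  ∑ i, ∑ j, k x (Xb i) *
    ((Matrix.of fun a b => k (Xb a) (Xb b) : Matrix (Fin r) (Fin r) ℝ)⁻¹ i j) * k (Xb j) x'

open Classical in
/-- The local Schur-complement kernel `k₂`: the Schur-complement kernel
`k(x,x') − k(x,Xb)·K(Xb,Xb)⁻¹·k(Xb,x')` within a cell of the partition `S`, and `0`
across cells. -/
noncomputable def localSchurKernel {𝒳 J : Type*} (k : 𝒳 → 𝒳 → ℝ) (S : J → Set 𝒳)
    {r : ℕ} (Xb : Fin r → 𝒳) (x x' : 𝒳) : ℝ :=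
  if ∃ j, x ∈ S j ∧ x' ∈ S j then k x x' - nystromKernel k Xb x x' else 0

/-!
View a symmetric kernel as the (possibly infinite) matrix `Matrix.of k` indexed by `𝒳`; being a
positive-definite kernel is then exactly positive semidefiniteness of this matrix. The kernel
`k - k_Nys` is the Schur complement of the finite block `K(X̄,X̄)` in the positive semidefinite block
matrix indexed by `𝒳 ⊕ Fin r`, hence positive semidefinite. Choosing for each point its cell `c x`,
the local kernel is the Hadamard product of this Schur complement with the positive semidefinite
matrix `[c x = c x']`, so the Schur product theorem concludes.
-/

open scoped Matrix ComplexOrder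

namespace Matrix

variable {R n : Type*} [Ring R] [PartialOrder R] [StarRing R]

theorem PosSemidef.of_forall_finset_submatrix {M : Matrix n n R}
    (h : ∀ s : Finset n, (M.submatrix ((↑) : s → n) (↑)).PosSemidef) : M.PosSemidef := by
  classical
  refine ⟨IsHermitian.ext fun i j => ?_, fun f => ?_⟩
  · simpa using (h {i, j}).1.apply ⟨i, by simp⟩ ⟨j, by simp⟩
  · simpa [Finsupp.sum, ← Finset.sum_attach f.support, ← Finset.subtype_mem_eq_attach,
      ← Finsupp.subtypeDomain_apply, ← Finsupp.support_subtypeDomain]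
      using (h f.support).2 (f.subtypeDomain (· ∈ f.support))

variable {𝕜 ι : Type*} [RCLike 𝕜] [Fintype ι] [DecidableEq ι]

theorem PosSemidef.sub_submatrix_mul_inv_mul_submatrix {M : Matrix n n 𝕜} (hM : M.PosSemidef)
    (e : ι → n) (he : IsUnit (M.submatrix e e).det) :
    (M - M.submatrix id e * (M.submatrix e e)⁻¹ * M.submatrix e id).PosSemidef := by
  have hD : (M.submatrix e e).PosDef :=
    (hM.submatrix e).posDef_iff_isUnit.mpr ((isUnit_iff_isUnit_det _).mpr he)
  have := invertibleOfIsUnitDet _ he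
  -- `PosDef.fromBlocks₂₂` needs finite blocks, so pass to finite principal submatrices.
  refine .of_forall_finset_submatrix fun s => ?_
  let v : s → n := Subtype.val
  have hblocks : M.submatrix (Sum.elim v e) (Sum.elim v e) =
      fromBlocks (M.submatrix v v) (M.submatrix v e) (M.submatrix v e)ᴴ (M.submatrix e e) := by
    rw [conjTranspose_submatrix, hM.isHermitian.eq]
    ext (i | i) (j | j) <;> rfl
  have hsub : (M - M.submatrix id e * (M.submatrix e e)⁻¹ * M.submatrix e id).submatrix v v =
      M.submatrix v v - M.submatrix v e * (M.submatrix e e)⁻¹ * M.submatrix e v := by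
    ext i j
    simp [mul_apply]
  have hfull := hM.submatrix (Sum.elim v e)
  rwa [hblocks, PosDef.fromBlocks₂₂ _ _ hD, conjTranspose_submatrix, hM.isHermitian.eq,
    ← hsub] at hfull

end Matrix

namespace PosDefKernel

variable {𝒳 : Type*} {k : 𝒳 → 𝒳 → ℝ}

theorem of_posSemidef (h : (Matrix.of k).PosSemidef) : PosDefKernel k := by
  intro m x _ α
  have := (h.submatrix x).dotProduct_mulVec_nonneg α
  simp only [star_trivial, dotProduct, Matrix.mulVec, Matrix.submatrix_apply, Matrix.of_apply,
    Finset.mul_sum] at this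
  exact this.trans_eq (Finset.sum_congr rfl fun i _ => Finset.sum_congr rfl fun j _ => by ring)

theorem posSemidef (hk : PosDefKernel k) (hsym : ∀ x y, k x y = k y x) :
    (Matrix.of k).PosSemidef := by
  refine ⟨Matrix.IsHermitian.ext fun x y => by simp [hsym], fun f => ?_⟩
  let e := f.support.equivFin
  have hsum (g : 𝒳 → ℝ) : ∑ i ∈ f.support, g i = ∑ t, g (e.symm t) := by
    rw [e.symm.sum_comp (fun i => g i), Finset.sum_coe_sort]
  have := hk _ (fun t => (e.symm t : 𝒳)) (Subtype.val_injective.comp e.symm.injective)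
    fun t => f (e.symm t)
  simp only [Finsupp.sum, star_trivial, Matrix.of_apply, hsum]
  exact this.trans_eq (Finset.sum_congr rfl fun i _ => Finset.sum_congr rfl fun j _ => by ring)

end PosDefKernel

theorem of_nystromKernel {𝒳 : Type*} (k : 𝒳 → 𝒳 → ℝ) {r : ℕ} (Xb : Fin r → 𝒳) :
    Matrix.of (nystromKernel k Xb) = (Matrix.of k).submatrix id Xb *
      ((Matrix.of k).submatrix Xb Xb)⁻¹ * (Matrix.of k).submatrix Xb id := by
  ext x x'
  simp only [nystromKernel, Matrix.of_apply, Matrix.mul_apply, Matrix.submatrix_apply, id,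
    Finset.sum_mul]
  exact Finset.sum_comm

theorem exists_mem_and_mem_iff_eq {𝒳 J : Type*} {S : J → Set 𝒳}
    (hSdisj : ∀ j j', j ≠ j' → Disjoint (S j) (S j')) {c : 𝒳 → J} (hc : ∀ x, x ∈ S (c x))
    (x x' : 𝒳) : (∃ j, x ∈ S j ∧ x' ∈ S j) ↔ c x = c x' := by
  have hcell (y : 𝒳) (j : J) (hy : y ∈ S j) : c y = j :=
    by_contra fun hne => Set.disjoint_left.mp (hSdisj _ _ hne) (hc y) hy
  exact ⟨fun ⟨j, hx, hx'⟩ => (hcell x j hx).trans (hcell x' j hx').symm,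
    fun h => ⟨c x, hc x, h ▸ hc x'⟩⟩

theorem of_localSchurKernel {𝒳 J : Type*} [DecidableEq J] (k : 𝒳 → 𝒳 → ℝ) {S : J → Set 𝒳}
    (hSdisj : ∀ j j', j ≠ j' → Disjoint (S j) (S j')) {c : 𝒳 → J} (hc : ∀ x, x ∈ S (c x))
    {r : ℕ} (Xb : Fin r → 𝒳) :
    Matrix.of (localSchurKernel k S Xb) =
      (1 : Matrix J J ℝ).submatrix c c ⊙ (Matrix.of k - Matrix.of (nystromKernel k Xb)) := by
  ext x x'
  simp [localSchurKernel, exists_mem_and_mem_iff_eq hSdisj hc, Matrix.one_apply]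

theorem localSchurKernel_posDef_general
    {𝒳 J : Type*} (k : 𝒳 → 𝒳 → ℝ)
    (hsym : ∀ x y, k x y = k y x)
    (hk : PosDefKernel k)
    (S : J → Set 𝒳)
    (hSdisj : ∀ j j', j ≠ j' → Disjoint (S j) (S j'))
    (hScover : (⋃ j, S j) = Set.univ)
    (r : ℕ) (Xb : Fin r → 𝒳)
    (hKinv : IsUnit (Matrix.of fun a b => k (Xb a) (Xb b) : Matrix (Fin r) (Fin r) ℝ).det) :
    PosDefKernel (localSchurKernel k S Xb) := by
  classical
  choose c hc using Set.iUnion_eq_univ_iff.mp hScover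
  have hschur := (hk.posSemidef hsym).sub_submatrix_mul_inv_mul_submatrix Xb hKinv
  refine .of_posSemidef ?_
  rw [of_localSchurKernel k hSdisj hc, of_nystromKernel]
  exact (Matrix.PosSemidef.one.submatrix c).hadamard hschur

/-- if `k` is a positive-definite kernel, `S` is a partition of `𝒳` into pairwise
disjoint nonempty cells, and `Xb` is a tuple of pairwise distinct landmark points with
`K(Xb,Xb)` invertible, then `k₂` is a positive-definite kernel. -/
theorem localSchurKernel_posDef
    {𝒳 J : Type*} (k : 𝒳 → 𝒳 → ℝ)
    (hsym : ∀ x y, k x y = k y x)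
    (hk : PosDefKernel k)
    (S : J → Set 𝒳)
    (hSne : ∀ j, (S j).Nonempty)
    (hSdisj : ∀ j j', j ≠ j' → Disjoint (S j) (S j'))
    (hScover : (⋃ j, S j) = Set.univ)
    (r : ℕ) (Xb : Fin r → 𝒳) (hinj : Function.Injective Xb)
    (hKinv : IsUnit (Matrix.of fun a b => k (Xb a) (Xb b) : Matrix (Fin r) (Fin r) ℝ).det) :
    PosDefKernel (localSchurKernel k S Xb) :=
  localSchurKernel_posDef_general k hsym hk S hSdisj hScover r Xb hKinv
end

section
/- Let k be a strictly positive-definite kernel on 𝒳, let {S_j}_{j∈J} be a partition of 𝒳 into pairwise disjoint nonempty subsets, and let X̄ be a finite tuple of pairwise distinct points of 𝒳. Define k_Nys(x,x') = k(x,X̄)·K(X̄,X̄)⁻¹·k(X̄,x') and k_comp(x,x') = k(x,x') if x,x' lie in the same cell S_j, and k_comp(x,x') = k_Nys(x,x') otherwise. Then for every finite tuple X of pairwise distinct points of 𝒳 containing at least one point not in X̄, the Frobenius norms satisfy ‖K(X,X) − K_comp(X,X)‖_F < ‖K(X,X) − K_Nys(X,X)‖_F, where K_comp(X,X) and K_Nys(X,X)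 denote the matrices with entries k_comp(xᵢ,xⱼ) and k_Nys(xᵢ,xⱼ) respectively. -/
open scoped BigOperators

/-- A function `k` is a strictly positive-definite kernel if for every finite list of
pairwise distinct points `x₁,…,xₘ` and all real coefficients not all zero,
`∑ᵢⱼ αᵢ αⱼ k(xᵢ,xⱼ) > 0`. -/
def StrictPosDefKernel {𝒳 : Type*} (k : 𝒳 → 𝒳 → ℝ) : Prop :=
  ∀ (m : ℕ) (x : Fin m → 𝒳), Function.Injective x →
    ∀ α : Fin m → ℝ, α ≠ 0 → 0 < ∑ i, ∑ j, α i * α j * k (x i) (x j)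

open Classical in
/-- The compositional kernel: the original kernel `k` within a cell of the partition `S`,
and the Nyström kernel based on the landmark points `Xb` across cells. -/
noncomputable def compositionalKernel {𝒳 J : Type*} (k : 𝒳 → 𝒳 → ℝ) (S : J → Set 𝒳)
    {r : ℕ} (Xb : Fin r → 𝒳) (x x' : 𝒳) : ℝ :=
  if ∃ j, x ∈ S j ∧ x' ∈ S j then k x x' else nystromKernel k Xb x x'

/-- The Frobenius norm of a real matrix: `‖M‖_F = √(∑ᵢⱼ Mᵢⱼ²)`. -/
noncomputable def frobeniusNorm {m n : ℕ} (M : Matrix (Fin m) (Fin n) ℝ) : ℝ :=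
  Real.sqrt (∑ i, ∑ j, (M i j) ^ 2)

/-!
The two approximations differ only on pairs lying in a common cell, where the compositional
kernel is exact, so entrywise its error is never larger. On the diagonal entry of a point
`x` outside the landmarks the Nyström error `k x x - k_Nys x x` is the Schur complement of
`K(X̄,X̄)` in the kernel matrix of `(X̄, x)`; both matrices are positive definite, so this
complement is the positive quotient of their determinants.
-/

open Matrix

section

variable {𝒳 : Type*} {k : 𝒳 → 𝒳 → ℝ}

namespace StrictPosDefKernel

theorem posDef_of_injective (hsym : ∀ x y, k x y = k y x) (hk : StrictPosDefKernel k)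
    {ι : Type*} [Fintype ι] {x : ι → 𝒳} (hx : Function.Injective x) :
    (of fun i j => k (x i) (x j)).PosDef := by
  refine .of_dotProduct_mulVec_pos (funext₂ fun i j => hsym (x j) (x i)) fun α hα => ?_
  let e := (Fintype.equivFin ι).symm
  have hαe : α ∘ e ≠ 0 := fun h => hα <| funext fun i => by simpa using congrFun h (e.symm i)
  have hreindex : ∑ i, ∑ j, α (e i) * α (e j) * k (x (e i)) (x (e j))
      = ∑ i, ∑ j, α i * α j * k (x i) (x j) :=
    (Finset.sum_congr rfl fun i _ => e.sum_comp fun j => α (e i) * α j * k (x (e i)) (x j)).trans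
      (e.sum_comp fun i => ∑ j, α i * α j * k (x i) (x j))
  have hpos := hreindex ▸ hk _ (x ∘ e) (hx.comp e.injective) (α ∘ e) hαe
  simpa [dotProduct, mulVec, Finset.mul_sum, mul_assoc, mul_comm, mul_left_comm] using hpos

end StrictPosDefKernel

theorem nystromKernel_lt_self (hsym : ∀ x y, k x y = k y x) (hk : StrictPosDefKernel k)
    {r : ℕ} {Xb : Fin r → 𝒳} (hinj : Function.Injective Xb) {x : 𝒳} (hx : ∀ b, x ≠ Xb b) :
    nystromKernel k Xb x x < k x x := by
  let K : Matrix (Fin r) (Fin r) ℝ := of fun a b => k (Xb a) (Xb b)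
  let B : Matrix (Fin r) Unit ℝ := of fun a _ => k (Xb a) x
  let C : Matrix Unit (Fin r) ℝ := of fun _ b => k x (Xb b)
  have hK : K.PosDef := hk.posDef_of_injective hsym hinj
  have hM : (fromBlocks K B C (of fun _ _ => k x x)).PosDef := by
    have hy : Function.Injective (Sum.elim Xb fun _ : Unit => x) :=
      hinj.sumElim (Function.injective_of_subsingleton _) fun b _ => (hx b).symm
    convert hk.posDef_of_injective hsym hy using 1
    ext (i | i) (j | j) <;> rfl
  let _ := hK.isUnit.invertible
  have hschur := det_fromBlocks₁₁ K B C (of fun _ _ => k x x)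
  rw [det_unique (n := Unit), invOf_eq_nonsing_inv] at hschur
  have hnys : (C * K⁻¹ * B) () () = nystromKernel k Xb x x := by
    simp only [nystromKernel, K, B, C, mul_apply, of_apply, Finset.sum_mul]
    exact Finset.sum_comm
  have hcompl_pos := (mul_pos_iff_of_pos_left hK.det_pos).1 (hschur ▸ hM.det_pos)
  simpa [hnys] using hcompl_pos

theorem compositionalKernel_of_mem {J : Type*} (S : J → Set 𝒳) {r : ℕ} (Xb : Fin r → 𝒳)
    {j : J} {x x' : 𝒳} (hx : x ∈ S j) (hx' : x' ∈ S j) :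
    compositionalKernel k S Xb x x' = k x x' :=
  if_pos ⟨j, hx, hx'⟩

theorem sq_sub_compositionalKernel_le {J : Type*} (S : J → Set 𝒳) {r : ℕ} (Xb : Fin r → 𝒳)
    (x x' : 𝒳) :
    (k x x' - compositionalKernel k S Xb x x') ^ 2 ≤ (k x x' - nystromKernel k Xb x x') ^ 2 := by
  unfold compositionalKernel
  split_ifs
  · simpa using sq_nonneg _
  · rfl

theorem frobeniusNorm_lt_of_sq_le_of_sq_lt {m n : ℕ} {A B : Matrix (Fin m) (Fin n) ℝ}
    (hle : ∀ i j, A i j ^ 2 ≤ B i j ^ 2) (hlt : ∃ i j, A i j ^ 2 < B i j ^ 2) :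
    frobeniusNorm A < frobeniusNorm B := by
  obtain ⟨i, j, hij⟩ := hlt
  refine Real.sqrt_lt_sqrt (by positivity) ?_
  exact Finset.sum_lt_sum (fun i _ => Finset.sum_le_sum fun j _ => hle i j)
    ⟨i, Finset.mem_univ i, Finset.sum_lt_sum (fun j _ => hle i j) ⟨j, Finset.mem_univ j, hij⟩⟩

end

theorem compositional_better_than_nystrom_frobenius_general
    {𝒳 J : Type*} (k : 𝒳 → 𝒳 → ℝ)
    (hsym : ∀ x y, k x y = k y x)
    (hk : StrictPosDefKernel k)
    (S : J → Set 𝒳)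
    (hScover : (⋃ j, S j) = Set.univ)
    (r : ℕ) (Xb : Fin r → 𝒳) (hinj : Function.Injective Xb)
    (m : ℕ) (X : Fin m → 𝒳)
    (hnew : ∃ a, ∀ b, X a ≠ Xb b) :
    frobeniusNorm
        ((Matrix.of fun a b => k (X a) (X b)) -
          (Matrix.of fun a b => compositionalKernel k S Xb (X a) (X b))) <
      frobeniusNorm
        ((Matrix.of fun a b => k (X a) (X b)) -
          (Matrix.of fun a b => nystromKernel k Xb (X a) (X b))) := by
  obtain ⟨a, ha⟩ := hnew
  obtain ⟨j, hj⟩ := Set.mem_iUnion.1 (hScover ▸ Set.mem_univ (X a))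
  refine frobeniusNorm_lt_of_sq_le_of_sq_lt
    (fun i i' => sq_sub_compositionalKernel_le S Xb (X i) (X i')) ⟨a, a, ?_⟩
  have hgap := sub_pos.2 (nystromKernel_lt_self hsym hk hinj ha)
  simpa [compositionalKernel_of_mem S Xb hj hj] using pow_pos hgap 2

/-- for a strictly positive-definite kernel `k`, a partition `S` of `𝒳` into
pairwise disjoint nonempty cells, landmark points `Xb`, and any tuple `X` of pairwise distinct
points containing at least one point not among the landmarks, the compositional kernel matrix
approximates `K(X,X)` strictly better than the Nyström kernel matrix in Frobenius norm. -/
theorem compositional_better_than_nystrom_frobenius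
    {𝒳 J : Type*} (k : 𝒳 → 𝒳 → ℝ)
    (hsym : ∀ x y, k x y = k y x)
    (hk : StrictPosDefKernel k)
    (S : J → Set 𝒳)
    (hSne : ∀ j, (S j).Nonempty)
    (hSdisj : ∀ j j', j ≠ j' → Disjoint (S j) (S j'))
    (hScover : (⋃ j, S j) = Set.univ)
    (r : ℕ) (Xb : Fin r → 𝒳) (hinj : Function.Injective Xb)
    (m : ℕ) (X : Fin m → 𝒳) (hinjX : Function.Injective X)
    (hnew : ∃ a, ∀ b, X a ≠ Xb b) :
    frobeniusNorm
        ((Matrix.of fun a b => k (X a) (X b)) -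
          (Matrix.of fun a b => compositionalKernel k S Xb (X a) (X b))) <
      frobeniusNorm
        ((Matrix.of fun a b => k (X a) (X b)) -
          (Matrix.of fun a b => nystromKernel k Xb (X a) (X b))) :=
  compositional_better_than_nystrom_frobenius_general k hsym hk S hScover r Xb hinj m X hnew
end

section
/- Let k be a positive-definite kernel on 𝒳 and let (T, {S_i}, {X̄_i}) be a hierarchical partitioning of 𝒳 (as in the context), with K(X̄_i,X̄_i) invertible for every internal node i. Then the hierarchically compositional kernel k_hier = k^(root) is a positive-definite kernel on 𝒳: for every finite list of pairwise distinct points x₁,…,xₘ ∈ 𝒳 and all real α₁,…,αₘ, ∑_{i,j} αᵢ αⱼ k_hier(xᵢ,xⱼ) ≥ 0. -/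
open scoped BigOperators

/-- A hierarchical partitioning of a set `𝒳`: a finite rooted tree (nodes indexed by
`Fin numNodes`, each nonroot node pointing to its `parent`; nodes are topologically ordered so
that the parent of a nonroot node has a smaller index), assigning to each node `i` a nonempty
subset `S i ⊆ 𝒳` with `S root = 𝒳`, such that the children of any internal node partition it
into pairwise disjoint nonempty cells, every internal node has at least two children, and each
internal node `i` carries a tuple `lm i` of `nlm i` pairwise distinct landmark points belonging
to `S i` (leaves carry no landmark points). -/
structure HierPartition (𝒳 : Type*) where
  numNodes : ℕ
  root : Fin numNodes
  parent : Fin numNodes → Fin numNodes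
  S : Fin numNodes → Set 𝒳
  nlm : Fin numNodes → ℕ
  lm : (i : Fin numNodes) → Fin (nlm i) → 𝒳
  parent_root : parent root = root
  parent_lt : ∀ i, i ≠ root → parent i < i
  S_root : S root = Set.univ
  S_nonempty : ∀ i, (S i).Nonempty
  S_subset : ∀ j, j ≠ root → S j ⊆ S (parent j)
  S_cover : ∀ i, (∃ j, j ≠ root ∧ parent j = i) →
    ∀ x ∈ S i, ∃ j, j ≠ root ∧ parent j = i ∧ x ∈ S j
  S_disjoint : ∀ j j', j ≠ root → j' ≠ root → parent j = parent j' → j ≠ j' →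
    Disjoint (S j) (S j')
  two_children : ∀ i, (∃ j, j ≠ root ∧ parent j = i) →
    ∃ j j', j ≠ root ∧ j' ≠ root ∧ parent j = i ∧ parent j' = i ∧ j ≠ j'
  lm_mem : ∀ i a, lm i a ∈ S i
  lm_inj : ∀ i, Function.Injective (lm i)
  leaf_nlm : ∀ i, (¬∃ j, j ≠ root ∧ parent j = i) → nlm i = 0

namespace HierPartition

variable {𝒳 : Type*}

/-- A node of the tree is a leaf if it has no children. -/
def IsLeaf (H : HierPartition 𝒳) (i : Fin H.numNodes) : Prop :=
  ¬∃ j, j ≠ H.root ∧ H.parent j = i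

/-- The kernel matrix `K(X̄ᵢ, X̄ᵢ)` on the landmark points of node `i`. -/
noncomputable def Kmat (k : 𝒳 → 𝒳 → ℝ) (H : HierPartition 𝒳) (i : Fin H.numNodes) :
    Matrix (Fin (H.nlm i)) (Fin (H.nlm i)) ℝ :=
  Matrix.of fun a b => k (H.lm i a) (H.lm i b)

open Classical in
/-- The row vector `ψ⁽ⁱ⁾(x, X̄ᵢ)` of the hierarchical composition, defined recursively: if the
child `j` of `i` containing `x` is a leaf then `ψ⁽ⁱ⁾(x,X̄ᵢ) = k(x,X̄ᵢ)`, and otherwise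
`ψ⁽ⁱ⁾(x,X̄ᵢ) = ψ⁽ʲ⁾(x,X̄ⱼ)·K(X̄ⱼ,X̄ⱼ)⁻¹·K(X̄ⱼ,X̄ᵢ)`.  (Junk values are returned when `i` is a
leaf or when `x ∉ Sᵢ`.) -/
noncomputable def psi (k : 𝒳 → 𝒳 → ℝ) (H : HierPartition 𝒳) :
    (i : Fin H.numNodes) → 𝒳 → Fin (H.nlm i) → ℝ := fun i x =>
  if h : ∃ j, j ≠ H.root ∧ H.parent j = i ∧ x ∈ H.S j then
    if H.IsLeaf (Classical.choose h) then fun a => k x (H.lm i a)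
    else fun a => ∑ b, ∑ c,
      psi k H (Classical.choose h) x b *
        ((Kmat k H (Classical.choose h))⁻¹ b c) *
        k (H.lm (Classical.choose h) c) (H.lm i a)
  else fun a => k x (H.lm i a)
termination_by i => H.numNodes - i.val
decreasing_by
  have hj := Classical.choose_spec h
  have h1 : i < Classical.choose h := by
    have h2 := H.parent_lt (Classical.choose h) hj.1
    rw [hj.2.1] at h2
    exact h2
  have h1' : i.val < (Classical.choose h).val := h1
  have h2 := (Classical.choose h).isLt
  omega

open Classical in
/-- The hierarchically defined kernel `k⁽ⁱ⁾` at node `i`: for a leaf it is `k` itself; for an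
internal node it equals `k⁽ʲ⁾(x,x')` when `x,x'` belong to a common child `j`, and
`ψ⁽ⁱ⁾(x,X̄ᵢ)·K(X̄ᵢ,X̄ᵢ)⁻¹·ψ⁽ⁱ⁾(X̄ᵢ,x')` otherwise. -/
noncomputable def khat (k : 𝒳 → 𝒳 → ℝ) (H : HierPartition 𝒳) :
    Fin H.numNodes → 𝒳 → 𝒳 → ℝ := fun i x x' =>
  if H.IsLeaf i then k x x'
  else if h : ∃ j, j ≠ H.root ∧ H.parent j = i ∧ x ∈ H.S j ∧ x' ∈ H.S j then
    khat k H (Classical.choose h) x x'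
  else ∑ a, ∑ b, psi k H i x a * ((Kmat k H i)⁻¹ a b) * psi k H i x' b
termination_by i x x' => H.numNodes - i.val
decreasing_by
  rename_i x x' i hleaf
  have hj := Classical.choose_spec h
  have h1 : i < Classical.choose h := by
    have h2 := H.parent_lt (Classical.choose h) hj.1
    rw [hj.2.1] at h2
    exact h2
  have h1' : i.val < (Classical.choose h).val := h1
  have h2 := (Classical.choose h).isLt
  omega

/-- The hierarchically compositional kernel `k_hier = k^(root)`. -/
noncomputable def kHier (k : 𝒳 → 𝒳 → ℝ) (H : HierPartition 𝒳) : 𝒳 → 𝒳 → ℝ :=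
  khat k H H.root

end HierPartition

/-!
Induction from the leaves shows that for every node `j` the Gram matrix of the augmented kernel
`[[k⁽ʲ⁾, χⱼ], [χⱼᵀ, k]]` is positive semidefinite, on points `x ∈ Sⱼ` and arbitrary points `y`;
here `χⱼ(x, y) = ψ⁽ʲ⁾(x,X̄ⱼ)·K(X̄ⱼ,X̄ⱼ)⁻¹·k(X̄ⱼ,y)`, and `χⱼ = k` at a leaf.
At an internal node, with `M = K(X̄ⱼ,X̄ⱼ)⁻¹` and `Z` the matrix with rows `ψ⁽ʲ⁾(x,X̄ⱼ)` and
`k(y,X̄ⱼ)`, this Gram matrix is `Z M Zᵀ` plus a block-diagonal matrix. Its blocks are, for every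
child `c`, the Schur complement of `K(X̄ⱼ,X̄ⱼ)` in the augmented Gram matrix of `c` with `y = X̄ⱼ`
(because `ψ⁽ʲ⁾(x,X̄ⱼ) = χ_c(x,X̄ⱼ)`), and the Schur complement of `K(X̄ⱼ,X̄ⱼ)` in the Gram matrix of
`k` on `(y, X̄ⱼ)`. Both are positive semidefinite, and so is `M`, since `K(X̄ⱼ,X̄ⱼ)` is positive
semidefinite and invertible. At the root, with no points `y`, this is the theorem.
-/

open Matrix

section KernelMatrix

variable {α β ι κ R : Type*}

def kernelMatrix (K : α → β → R) (x : ι → α) (y : κ → β) : Matrix ι κ R :=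
  of fun i j => K (x i) (y j)

@[simp]
lemma kernelMatrix_apply (K : α → β → R) (x : ι → α) (y : κ → β) (i : ι) (j : κ) :
    kernelMatrix K x y i j = K (x i) (y j) := rfl

lemma kernelMatrix_sumElim (K : α → α → R) (x : ι → α) (y : κ → α) :
    kernelMatrix K (Sum.elim x y) (Sum.elim x y) =
      fromBlocks (kernelMatrix K x x) (kernelMatrix K x y) (kernelMatrix K y x)
        (kernelMatrix K y y) := by
  ext (i | i) (j | j) <;> rfl

lemma transpose_kernelMatrix {K : α → α → R} (hsym : ∀ a b, K a b = K b a) (x : ι → α)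
    (y : κ → α) : (kernelMatrix K x y)ᵀ = kernelMatrix K y x := by
  ext i j
  exact hsym _ _

lemma dotProduct_mulVec_kernelMatrix [Fintype ι] (K : α → α → ℝ) (x : ι → α) (v : ι → ℝ) :
    star v ⬝ᵥ (kernelMatrix K x x *ᵥ v) = ∑ i, ∑ j, v i * v j * K (x i) (x j) := by
  simp only [star_trivial, dotProduct, mulVec, kernelMatrix_apply, Finset.mul_sum]
  exact Finset.sum_congr rfl fun i _ => Finset.sum_congr rfl fun j _ => by ring

end KernelMatrix

namespace PosDefKernel

variable {𝒳 : Type*} {K : 𝒳 → 𝒳 → ℝ}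

lemma posSemidef_kernelMatrix (hK : PosDefKernel K) (hsym : ∀ x y, K x y = K y x) {ι : Type*}
    [Fintype ι] (x : ι → 𝒳) : (kernelMatrix K x x).PosSemidef := by
  classical
  let e := (Fintype.equivFin (Set.range x)).symm
  have hinj : Function.Injective (Subtype.val ∘ e) := Subtype.val_injective.comp e.injective
  have hpsd : (kernelMatrix K (Subtype.val ∘ e) (Subtype.val ∘ e)).PosSemidef :=
    .of_dotProduct_mulVec_nonneg (transpose_kernelMatrix hsym _ _) fun v => by
      simpa only [dotProduct_mulVec_kernelMatrix] using hK _ _ hinj v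
  convert hpsd.submatrix (e.symm ∘ Set.rangeFactorization x) using 1
  ext i j
  simp [Set.rangeFactorization]

lemma of_posSemidef_kernelMatrix
    (h : ∀ (m : ℕ) (x : Fin m → 𝒳), (kernelMatrix K x x).PosSemidef) : PosDefKernel K :=
  fun m x _ α => by
    simpa only [dotProduct_mulVec_kernelMatrix] using (h m x).dotProduct_mulVec_nonneg α

end PosDefKernel

namespace Matrix

variable {ι κ σ R : Type*} [CommRing R] [PartialOrder R] [StarRing R] [IsOrderedAddMonoid R]

lemma PosSemidef.fromBlocks_zero [Fintype ι] [Fintype κ] {A : Matrix ι ι R} {D : Matrix κ κ R}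
    (hA : A.PosSemidef) (hD : D.PosSemidef) : (fromBlocks A 0 0 D).PosSemidef := by
  refine .of_dotProduct_mulVec_nonneg (hA.1.fromBlocks (by simp) hD.1) fun v => ?_
  rw [← Sum.elim_comp_inl_inr v, fromBlocks_mulVec, dotProduct_block]
  simp only [zero_mulVec, add_zero, zero_add]
  exact add_nonneg (hA.dotProduct_mulVec_nonneg _) (hD.dotProduct_mulVec_nonneg _)

lemma PosSemidef.of_fiberwise [Fintype ι] [DecidableEq σ] {F : Matrix ι ι R} (f : ι → σ)
    (hF : ∀ i₀, (F.submatrix (Subtype.val : {i // f i = f i₀} → ι) Subtype.val).PosSemidef) :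
    (of fun i j => if f i = f j then F i j else 0).PosSemidef := by
  refine .of_dotProduct_mulVec_nonneg ?_ fun v => ?_
  · ext i j
    simp only [conjTranspose_apply, of_apply, eq_comm (a := f j)]
    split_ifs with h
    · simpa using congrArg star (congrFun₂ (hF i).1 ⟨j, h.symm⟩ ⟨i, rfl⟩).symm
    · simp
  · have hfib := fun i₀ => (hF i₀).dotProduct_mulVec_nonneg (fun i => v i)
    simp only [dotProduct, mulVec, of_apply, submatrix_apply, Pi.star_apply] at hfib ⊢
    rw [← Finset.sum_fiberwise_of_maps_to
      (fun i _ => Finset.mem_image_of_mem f (Finset.mem_univ i))]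
    refine Finset.sum_nonneg fun c hc => ?_
    obtain ⟨i₀, -, rfl⟩ := Finset.mem_image.mp hc
    have hmem : ∀ i, i ∈ Finset.univ.filter (fun i => f i = f i₀) ↔ f i = f i₀ := by simp
    refine le_of_le_of_eq (hfib i₀) ?_
    rw [Finset.sum_subtype _ hmem]
    refine Finset.sum_congr rfl fun i _ => ?_
    rw [← Finset.sum_subtype _ hmem (fun j => F i j * v j), Finset.sum_filter, i.2]
    simp only [ite_mul, zero_mul, eq_comm]

lemma PosDef.posSemidef_sub_of_fromBlocks [Finite ι] [Fintype κ] [DecidableEq κ]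
    {A : Matrix ι ι ℝ} {B : Matrix ι κ ℝ} {C : Matrix κ κ ℝ} (hC : C.PosDef)
    (h : (fromBlocks A B Bᵀ C).PosSemidef) : (A - B * C⁻¹ * Bᵀ).PosSemidef := by
  let _ := hC.isUnit.invertible
  simpa [conjTranspose_eq_transpose_of_trivial] using
    (hC.fromBlocks₂₂ A B).mp (by simpa [conjTranspose_eq_transpose_of_trivial] using h)

end Matrix

namespace HierPartition

universe u

variable {𝒳 : Type*} {k : 𝒳 → 𝒳 → ℝ} {H : HierPartition 𝒳}

open Classical in
variable (k H) in
/-- `χⱼ(x, y) = ψ⁽ʲ⁾(x,X̄ⱼ)·K(X̄ⱼ,X̄ⱼ)⁻¹·k(X̄ⱼ,y)`: the kernel `k⁽ʲ⁾` with only its first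
argument compressed. -/
noncomputable def khatCross (j : Fin H.numNodes) (x y : 𝒳) : ℝ :=
  if H.IsLeaf j then k x y
  else ∑ b, ∑ c, psi k H j x b * (Kmat k H j)⁻¹ b c * k (H.lm j c) y

variable (k H) in
noncomputable def blockGram {ι κ : Type*} (j : Fin H.numNodes) (x : ι → 𝒳) (y : κ → 𝒳) :
    Matrix (ι ⊕ κ) (ι ⊕ κ) ℝ :=
  fromBlocks (kernelMatrix (khat k H j) x x) (kernelMatrix (khatCross k H j) x y)
    (kernelMatrix (khatCross k H j) x y)ᵀ (kernelMatrix k y y)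

lemma child_eq_of_mem {j c c' : Fin H.numNodes} {x : 𝒳} (hc : c ≠ H.root) (hc' : c' ≠ H.root)
    (hp : H.parent c = j) (hp' : H.parent c' = j) (hx : x ∈ H.S c) (hx' : x ∈ H.S c') :
    c = c' := by
  by_contra hne
  exact Set.disjoint_left.mp (H.S_disjoint c c' hc hc' (hp.trans hp'.symm) hne) hx hx'

lemma lt_of_parent_eq {j c : Fin H.numNodes} (hc : c ≠ H.root) (hp : H.parent c = j) : j < c :=
  hp ▸ H.parent_lt c hc

variable (k) in
lemma psi_eq_khatCross {j c : Fin H.numNodes} {x : 𝒳} (hc : c ≠ H.root)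
    (hp : H.parent c = j) (hx : x ∈ H.S c) (a : Fin (H.nlm j)) :
    psi k H j x a = khatCross k H c x (H.lm j a) := by
  have h : ∃ c', c' ≠ H.root ∧ H.parent c' = j ∧ x ∈ H.S c' := ⟨c, hc, hp, hx⟩
  obtain rfl : c = h.choose :=
    child_eq_of_mem hc h.choose_spec.1 hp h.choose_spec.2.1 hx h.choose_spec.2.2
  rw [psi, dif_pos h, khatCross]
  split_ifs <;> rfl

variable (k) in
lemma khat_of_isLeaf {j : Fin H.numNodes} (hl : H.IsLeaf j) (x x' : 𝒳) :
    khat k H j x x' = k x x' := by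
  rw [khat, if_pos hl]

variable (k) in
lemma khat_of_mem_child {j c : Fin H.numNodes} (hl : ¬H.IsLeaf j) (hc : c ≠ H.root)
    (hp : H.parent c = j) {x x' : 𝒳} (hx : x ∈ H.S c) (hx' : x' ∈ H.S c) :
    khat k H j x x' = khat k H c x x' := by
  have h : ∃ c', c' ≠ H.root ∧ H.parent c' = j ∧ x ∈ H.S c' ∧ x' ∈ H.S c' :=
    ⟨c, hc, hp, hx, hx'⟩
  obtain rfl : c = h.choose :=
    child_eq_of_mem hc h.choose_spec.1 hp h.choose_spec.2.1 hx h.choose_spec.2.2.1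
  rw [khat, if_neg hl, dif_pos h]

variable (k) in
lemma khat_of_mem_children_ne {j c c' : Fin H.numNodes} (hl : ¬H.IsLeaf j) (hc : c ≠ H.root)
    (hc' : c' ≠ H.root) (hp : H.parent c = j) (hp' : H.parent c' = j) (hne : c ≠ c')
    {x x' : 𝒳} (hx : x ∈ H.S c) (hx' : x' ∈ H.S c') :
    khat k H j x x' = ∑ a, ∑ b, psi k H j x a * (Kmat k H j)⁻¹ a b * psi k H j x' b := by
  have h : ¬∃ d, d ≠ H.root ∧ H.parent d = j ∧ x ∈ H.S d ∧ x' ∈ H.S d := by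
    rintro ⟨d, hd, hpd, hdx, hdx'⟩
    exact hne ((child_eq_of_mem hc hd hp hpd hx hdx).trans
      (child_eq_of_mem hd hc' hpd hp' hdx' hx'))
  rw [khat, if_neg hl, dif_neg h]

lemma posDef_Kmat (hk : PosDefKernel k) (hsym : ∀ x y, k x y = k y x) {j : Fin H.numNodes}
    (hinv : IsUnit (Kmat k H j).det) : (Kmat k H j).PosDef :=
  (hk.posSemidef_kernelMatrix hsym (H.lm j)).posDef_iff_isUnit.mpr
    ((isUnit_iff_isUnit_det _).mpr hinv)

lemma blockGram_eq_of_children (hsym : ∀ x y, k x y = k y x) {j : Fin H.numNodes}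
    (hl : ¬H.IsLeaf j) {ι κ : Type*} [Fintype ι] {x : ι → 𝒳} {c : ι → Fin H.numNodes}
    (hc : ∀ i, c i ≠ H.root) (hp : ∀ i, H.parent (c i) = j) (hx : ∀ i, x i ∈ H.S (c i))
    (y : κ → 𝒳) :
    let V : Matrix ι (Fin (H.nlm j)) ℝ := of fun i => psi k H j (x i)
    let W := kernelMatrix k y (H.lm j)
    let M := (Kmat k H j)⁻¹
    blockGram k H j x y =
      fromBlocks (of fun i i' => if c i = c i' then
          khat k H (c i) (x i) (x i') - (V * M * Vᵀ) i i' else 0) 0 0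
        (kernelMatrix k y y - W * M * Wᵀ) + fromRows V W * M * (fromRows V W)ᵀ := by
  intro V W M
  have hM : Mᵀ = M := by
    rw [transpose_nonsing_inv]
    exact congrArg _ (transpose_kernelMatrix hsym _ _)
  have hcross : kernelMatrix (khatCross k H j) x y = V * M * Wᵀ := by
    ext i p
    simp only [kernelMatrix_apply, khatCross, if_neg hl, mul_apply, transpose_apply, of_apply,
      V, W, Finset.sum_mul, hsym (y p)]
    exact Finset.sum_comm
  rw [transpose_fromRows, fromRows_mul, fromRows_mul_fromCols, fromBlocks_add, blockGram, hcross]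
  congr 1
  · ext i i'
    simp only [Matrix.add_apply, of_apply, kernelMatrix_apply]
    split_ifs with hcc
    · rw [sub_add_cancel, khat_of_mem_child k hl (hc i) (hp i) (hx i) (hcc ▸ hx i')]
    · rw [zero_add, khat_of_mem_children_ne k hl (hc i) (hc i') (hp i) (hp i') hcc (hx i) (hx i')]
      simp only [V, mul_apply, transpose_apply, of_apply, Finset.sum_mul]
      exact Finset.sum_comm
  · simp
  · simp [transpose_mul, hM, Matrix.mul_assoc]
  · simp

lemma posSemidef_blockGram_of_isLeaf (hk : PosDefKernel k) (hsym : ∀ x y, k x y = k y x)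
    {j : Fin H.numNodes} (hl : H.IsLeaf j) {ι κ : Type*} [Fintype ι] [Fintype κ]
    (x : ι → 𝒳) (y : κ → 𝒳) : (blockGram k H j x y).PosSemidef := by
  have hkhat : khat k H j = k := funext₂ (khat_of_isLeaf k hl)
  have hcross : khatCross k H j = k := by
    unfold khatCross
    simp only [if_pos hl]
  rw [blockGram, hkhat, hcross, transpose_kernelMatrix hsym, ← kernelMatrix_sumElim]
  exact hk.posSemidef_kernelMatrix hsym _

lemma posSemidef_blockGram_of_children (hk : PosDefKernel k) (hsym : ∀ x y, k x y = k y x)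
    {j : Fin H.numNodes} (hl : ¬H.IsLeaf j) (hinv : IsUnit (Kmat k H j).det)
    (ih : ∀ c, c ≠ H.root → H.parent c = j → ∀ {ι : Type u} [Fintype ι] (x : ι → 𝒳),
      (∀ i, x i ∈ H.S c) → (blockGram k H c x (H.lm j)).PosSemidef)
    {ι : Type u} {κ : Type*} [Fintype ι] [Fintype κ] (x : ι → 𝒳) (hx : ∀ i, x i ∈ H.S j)
    (y : κ → 𝒳) : (blockGram k H j x y).PosSemidef := by
  choose c hc using fun i => H.S_cover j (not_not.mp hl) (x i) (hx i)
  have hC := posDef_Kmat hk hsym hinv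
  rw [blockGram_eq_of_children hsym hl (fun i => (hc i).1) (fun i => (hc i).2.1)
    (fun i => (hc i).2.2) y]
  refine .add (.fromBlocks_zero (.of_fiberwise c fun i₀ => ?children) ?points) ?lowRank
  case children =>
    have hmem : ∀ i : {i // c i = c i₀}, x i ∈ H.S (c i₀) := fun i => by
      simpa only [i.2] using (hc i).2.2
    have hpsi : ∀ i : {i // c i = c i₀},
        psi k H j (x i) = fun a => khatCross k H (c i₀) (x i) (H.lm j a) :=
      fun i => funext (psi_eq_khatCross k (hc i₀).1 (hc i₀).2.1 (hmem i))
    have hfib := ih (c i₀) (hc i₀).1 (hc i₀).2.1 (fun i : {i // c i = c i₀} => x i) hmem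
    refine (congrArg PosSemidef ?_).mp (hC.posSemidef_sub_of_fromBlocks hfib)
    ext i i'
    simp only [submatrix, of_apply, Matrix.sub_apply, kernelMatrix_apply, i.2, mul_apply,
      transpose_apply, hpsi]
  case points =>
    have hy := hk.posSemidef_kernelMatrix hsym (Sum.elim y (H.lm j))
    rw [kernelMatrix_sumElim, ← transpose_kernelMatrix hsym y (H.lm j)] at hy
    exact hC.posSemidef_sub_of_fromBlocks hy
  case lowRank =>
    simpa [conjTranspose_eq_transpose_of_trivial] using
      hC.inv.posSemidef.mul_mul_conjTranspose_same (fromRows _ (kernelMatrix k y (H.lm j)))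

theorem posSemidef_blockGram (hk : PosDefKernel k) (hsym : ∀ x y, k x y = k y x)
    (hinv : ∀ i, ¬H.IsLeaf i → IsUnit (Kmat k H i).det) (j : Fin H.numNodes) {ι : Type u}
    [Fintype ι] (x : ι → 𝒳) (hx : ∀ i, x i ∈ H.S j) {κ : Type} [Fintype κ] (y : κ → 𝒳) :
    (blockGram k H j x y).PosSemidef := by
  induction j using WellFoundedGT.induction generalizing ι κ with
  | _ j ih =>
    by_cases hl : H.IsLeaf j
    · exact posSemidef_blockGram_of_isLeaf hk hsym hl x y
    · exact posSemidef_blockGram_of_children hk hsym hl (hinv j hl)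
        (fun c hc hp _ _ x' hx' => ih c (lt_of_parent_eq hc hp) x' hx' (H.lm j)) x hx y

end HierPartition

/-- if `k` is a positive-definite kernel and `(T, {Sᵢ}, {X̄ᵢ})` is a hierarchical
partitioning of `𝒳` with `K(X̄ᵢ,X̄ᵢ)` invertible for every internal node `i`, then the
hierarchically compositional kernel `k_hier = k^(root)` is a positive-definite kernel. -/
theorem kHier_posDefKernel {𝒳 : Type*} (k : 𝒳 → 𝒳 → ℝ)
    (hsym : ∀ x y, k x y = k y x)
    (hk : PosDefKernel k)
    (H : HierPartition 𝒳)
    (hinv : ∀ i, ¬H.IsLeaf i → IsUnit (HierPartition.Kmat k H i).det) :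
    PosDefKernel (HierPartition.kHier k H) := by
  refine .of_posSemidef_kernelMatrix fun m x => ?_
  have hroot := HierPartition.posSemidef_blockGram hk hsym hinv H.root x
    (fun i => H.S_root ▸ Set.mem_univ (x i)) (Fin.elim0 : Fin 0 → 𝒳)
  exact hroot.submatrix Sum.inl
end
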